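/- Reification adjunction (external form): let C be a small category, A and B presheaves on C, and H the internal hom presheaf H(S) = Hom(yoneda.obj S × A, B). For a function F from subpresheaves of A to subpresheaves of B, define R(F) by: g ∈ R(F)(S) iff for every subpresheaf χ of A, every object R, every morphism u : R ⟶ S, and every a ∈ χ(R), one has g_R(u, a) ∈ F(χ)(R). Then R(F) is a subpresheaf of H, and for every subpresheaf Φ of H: Φ ≤ R(F) if and only if for every subpresheaf χ of A, the application predicate ev(Φ, χ), defined by ev(Φ, χ)(R) = { b ∈ B(R) | ∃ g ∈ Φ(R), ∃ a ∈ χ(R), g_R(id_R, a) = b }, satisfies ev(Φ, χ) ≤ F(χ). -/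

import Mathlib

open CategoryTheory CategoryTheory.GrothendieckTopology Opposite

universe u

variable {C : Type u} [SmallCategory C]

/-- Pointwise binary product of presheaves. -/
@[simps]
def prodP (A B : Cᵒᵖ ⥤ Type u) : Cᵒᵖ ⥤ Type u where
  obj S := A.obj S × B.obj S
  map i := TypeCat.ofHom fun x => (A.map i x.1, B.map i x.2)

/-- The internal hom presheaf `H(S) = Hom(yoneda.obj S × A, B)`, with restriction by
precomposition. -/
@[simps]
def homP (A B : Cᵒᵖ ⥤ Type u) : Cᵒᵖ ⥤ Type u where
  obj S := prodP (yoneda.obj S.unop) A ⟶ B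
  map {S T} i := TypeCat.ofHom fun g =>
    { app := fun R => TypeCat.ofHom fun x => g.app R (x.1 ≫ i.unop, x.2)
      naturality := by
        intro R R' j
        ext x
        have h := NatTrans.naturality_apply g j
          (show (prodP (yoneda.obj S.unop) A).obj R from (x.1 ≫ i.unop, x.2))
        refine Eq.trans ?_ h
        change g.app R' (show (prodP (yoneda.obj S.unop) A).obj R' from
            ((j.unop ≫ x.1) ≫ i.unop, A.map j x.2)) =
          g.app R' (show (prodP (yoneda.obj S.unop) A).obj R' from
            (j.unop ≫ x.1 ≫ i.unop, A.map j x.2))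
        rw [Category.assoc] }
  map_id := by
    intro S
    ext g R x
    simp <;> rfl
  map_comp := by
    intro S T U i j
    ext g R x
    simp

namespace Reification

variable {A B : Cᵒᵖ ⥤ Type u}

lemma homP_map_app_id {S T : Cᵒᵖ} (i : S ⟶ T) (g : (homP A B).obj S) (a : A.obj T) :
    ((homP A B).map i g).app T (𝟙 T.unop, a) = g.app T (i.unop, a) := by
  change g.app T (𝟙 T.unop ≫ i.unop, a) = _
  rw [Category.id_comp]

def reify (Fm : Subfunctor A → Subfunctor B) : Subfunctor (homP A B) where
  obj S := {g | ∀ (χ : Subfunctor A) (R : C) (u : R ⟶ S.unop) (a : A.obj (op R)),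
    a ∈ χ.obj (op R) → g.app (op R) (u, a) ∈ (Fm χ).obj (op R)}
  map i _ hg χ R u a ha := hg χ R (u ≫ i.unop) a ha

def eval (Φ : Subfunctor (homP A B)) (χ : Subfunctor A) : Subfunctor B where
  obj R := {b | ∃ g ∈ Φ.obj R, ∃ a ∈ χ.obj R, g.app R (𝟙 R.unop, a) = b}
  map {R R'} j := by
    rintro _ ⟨g, hg, a, ha, rfl⟩
    refine ⟨(homP A B).map j g, Φ.map j hg, A.map j a, χ.map j ha, ?_⟩
    -- restricting `g(id, a)` along `j` gives `g(j, a·j) = (g·j)(id, a·j)`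
    rw [homP_map_app_id, ← Category.comp_id j.unop]
    exact NatTrans.naturality_apply g j ((𝟙 R.unop, a) : (yoneda.obj R.unop).obj R × A.obj R)

theorem le_reify_iff (Fm : Subfunctor A → Subfunctor B) (Φ : Subfunctor (homP A B)) :
    Φ ≤ reify Fm ↔ ∀ χ, eval Φ χ ≤ Fm χ := by
  constructor
  · rintro h χ R _ ⟨g, hg, a, ha, rfl⟩
    exact h R hg χ R.unop (𝟙 R.unop) a ha
  · intro h S g hg χ R u a ha
    rw [← Quiver.Hom.unop_op u, ← homP_map_app_id]
    exact h χ (op R) ⟨_, Φ.map u.op hg, a, ha, rfl⟩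

end Reification

/-- Reification adjunction (external form): for a function `Fm` from subpresheaves of `A`
to subpresheaves of `B`, the reification `R(Fm)` defined by
`g ∈ R(Fm)(S) iff ∀ χ, ∀ u : R ⟶ S, ∀ a ∈ χ(R), g_R(u, a) ∈ Fm(χ)(R)` is a subpresheaf of
the internal hom presheaf `H`, and for every subpresheaf `Φ` of `H`, `Φ ≤ R(Fm)` iff for
every subpresheaf `χ` of `A` the application predicate
`ev(Φ, χ)(R) = {b | ∃ g ∈ Φ(R), ∃ a ∈ χ(R), g_R(id, a) = b}` satisfies `ev(Φ, χ) ≤ Fm(χ)`. -/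
theorem stmt12 (C : Type u) [SmallCategory C] (A B : Cᵒᵖ ⥤ Type u)
    (Fm : Subfunctor A → Subfunctor B) :
    ∃ RF : Subfunctor (homP A B),
      (∀ S : Cᵒᵖ, RF.obj S =
        {g : (homP A B).obj S | ∀ (χ : Subfunctor A) (R : C) (u : R ⟶ S.unop)
          (a : A.obj (op R)), a ∈ χ.obj (op R) → g.app (op R) (u, a) ∈ (Fm χ).obj (op R)}) ∧
      (∀ Φ : Subfunctor (homP A B),
        Φ ≤ RF ↔ ∀ (χ : Subfunctor A) (R : Cᵒᵖ),
          {b : B.obj R | ∃ g ∈ Φ.obj R, ∃ a ∈ χ.obj R, g.app R (𝟙 R.unop, a) = b}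
            ⊆ (Fm χ).obj R) :=
  ⟨Reification.reify Fm, fun _ => rfl, Reification.le_reify_iff Fm⟩
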